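/- arXiv:0810.0407 — 2 statements merged into one kernel-verified Lean document; each statement's English description precedes it below -/
import Mathlib

section
/- Let Λ be an F-type icosahedral model set and let U be a finite set of pairwise non-parallel directions in S². If there exists a U-polygon in Λ, then the set C(Λ) of convex subsets of Λ is not determined by the X-rays in the directions of U; that is, there exist two distinct convex subsets C₁ ≠ C₂ of Λ with X_u C₁ = X_u C₂ for all u ∈ U. -/
noncomputable section

open Set

/-- The golden ratio τ = (1+√5)/2. -/
def gold : ℝ := (1 + Real.sqrt 5) / 2

/-- Euclidean 3-space. -/
abbrev E3 := EuclideanSpace ℝ (Fin 3)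

/-- Membership in ℚ(τ) ⊂ ℝ. -/
def inQtau (x : ℝ) : Prop := ∃ p q : ℚ, x = (p : ℝ) + (q : ℝ) * gold

open Classical in
/-- The Galois conjugation on ℚ(τ) ⊂ ℝ, determined by √5 ↦ -√5, i.e. τ ↦ 1-τ
(extended by 0 outside ℚ(τ)). -/
def conjTau (x : ℝ) : ℝ :=
  if h : ∃ p q : ℚ, x = (p : ℝ) + (q : ℝ) * gold then
    ((Classical.choose h : ℚ) : ℝ) +
      ((Classical.choose (Classical.choose_spec h) : ℚ) : ℝ) * (1 - gold)
  else 0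

/-- The ring ℤ[τ] = ℤ ⊕ ℤτ ⊂ ℝ. -/
def Ztau : Set ℝ := {x | ∃ m n : ℤ, x = (m : ℝ) + (n : ℝ) * gold}

/-- The standard face-centred icosahedral module M_F. -/
def MF : Set E3 :=
  {v | ∃ a b c : ℝ, a ∈ Ztau ∧ b ∈ Ztau ∧ c ∈ Ztau ∧
    v = a • (WithLp.toLp 2 ![2, 0, 0] : E3) + b • (WithLp.toLp 2 ![gold + 1, gold, 1] : E3) + c • (WithLp.toLp 2 ![0, 0, 2] : E3)}

/-- L := (1/2)·M_F. -/
def Lset : Set E3 := {v | (2 : ℝ) • v ∈ MF}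

/-- The star map: coordinatewise Galois conjugation. -/
def starMap (v : E3) : E3 := WithLp.toLp 2 (fun i => conjTau (v i) : Fin 3 → ℝ)

/-- A window: ∅ ≠ int W ⊆ W ⊆ cl(int W) with cl(int W) compact. -/
def IsWindow (W : Set E3) : Prop :=
  (interior W).Nonempty ∧ W ⊆ closure (interior W) ∧ IsCompact (closure (interior W))

/-- The F-type icosahedral model set Λ(t,W). -/
def modelSet (t : E3) (W : Set E3) : Set E3 :=
  {x | ∃ α ∈ Lset, starMap α ∈ W ∧ x = t + α}

/-- Genericity of the window: ∂W ∩ L* = ∅. -/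
def IsGeneric (W : Set E3) : Prop := frontier W ∩ (starMap '' Lset) = ∅

/-- The line through p in direction u. -/
def lineThrough (p u : E3) : Set E3 := {x | ∃ r : ℝ, x = p + r • u}

/-- An L-direction: a unit vector parallel to a nonzero element of L. -/
def IsLDir (u : E3) : Prop :=
  u ∈ Metric.sphere (0 : E3) 1 ∧ ∃ v ∈ Lset, v ≠ 0 ∧ ∃ c : ℝ, u = c • v

/-- An L^{(τ,0,1)}-direction: an L-direction orthogonal to (τ,0,1). -/
def IsLTauDir (u : E3) : Prop :=
  IsLDir u ∧ gold * u 0 + u 2 = 0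

/-- A set of pairwise non-parallel directions. -/
def PairwiseNonParallel (U : Set E3) : Prop :=
  U.Pairwise fun u v => ¬ ∃ c : ℝ, u = c • v

/-- Two finite sets have the same X-ray in direction u. -/
def XRayEq (F G : Set E3) (u : E3) : Prop :=
  ∀ p : E3, (F ∩ lineThrough p u).ncard = (G ∩ lineThrough p u).ncard

/-- C is a (finite) convex subset of Λ, i.e. C = conv(C) ∩ Λ. -/
def ConvexSubset (Λ C : Set E3) : Prop :=
  C.Finite ∧ C ⊆ Λ ∧ C = convexHull ℝ C ∩ Λ

/-- A collection of finite sets is determined by the X-rays in the directions of U. -/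
def DeterminedBy (𝒞 : Set (Set E3)) (U : Set E3) : Prop :=
  ∀ F₁ ∈ 𝒞, ∀ F₂ ∈ 𝒞, (∀ u ∈ U, XRayEq F₁ F₂ u) → F₁ = F₂


/-- A U-polygon in Λ, given by its vertex set P: a non-degenerate (planar, not
collinear) convex polygon with all vertices in Λ such that every line parallel to a
direction of U through a vertex also meets another vertex. -/
def IsUPolygon (U Λ P : Set E3) : Prop :=
  P.Finite ∧ 3 ≤ P.ncard ∧ P ⊆ Λ ∧ Coplanar ℝ P ∧ ¬ Collinear ℝ P ∧
    (∀ x ∈ P, x ∈ Set.extremePoints ℝ (convexHull ℝ P)) ∧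
    (∀ u ∈ U, ∀ x ∈ P, ∃ y ∈ P, y ≠ x ∧ y ∈ lineThrough x u)



-- ### Auxiliary lemmas ###


lemma sqrt5_sq : Real.sqrt 5 * Real.sqrt 5 = 5 :=
  Real.mul_self_sqrt (by norm_num)

lemma sqrt5_ge_two : (2:ℝ) ≤ Real.sqrt 5 := by
  nlinarith [sqrt5_sq, Real.sqrt_nonneg 5]

lemma sqrt5_le_three : Real.sqrt 5 ≤ 3 := by
  nlinarith [sqrt5_sq, Real.sqrt_nonneg 5]

lemma mgold_sq : gold * gold = gold + 1 := by
  unfold gold; nlinarith [sqrt5_sq]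

lemma mgold_pos : 0 < gold := by unfold gold; nlinarith [sqrt5_ge_two]
lemma gold_le_two : gold ≤ 2 := by unfold gold; nlinarith [sqrt5_le_three]

lemma irrational_gold : Irrational gold := by
  have h5 : Irrational (Real.sqrt 5) := Nat.Prime.irrational_sqrt (by norm_num)
  rintro ⟨r, hr⟩
  exact h5 ⟨2*r - 1, by push_cast; rw [hr]; unfold gold; ring⟩

lemma gold_repr_unique {p q p' q' : ℚ} (h : (p:ℝ) + q * gold = (p':ℝ) + q' * gold) :
    p = p' ∧ q = q' := by
  by_cases hq : q = q'
  · subst hq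
    constructor
    · have : (p:ℝ) = p' := by linarith
      exact_mod_cast this
    · rfl
  · exfalso
    have hne : ((q:ℝ) - q') ≠ 0 := by
      intro h0; apply hq; have : (q:ℝ) = q' := by linarith
      exact_mod_cast this
    have : gold = ((p' - p : ℚ) : ℝ) / ((q - q' : ℚ) : ℝ) := by
      push_cast; field_simp; nlinarith [h]
    apply irrational_gold
    rw [this]
    push_cast
    exact ⟨(p' - p)/(q - q'), by push_cast; ring⟩


lemma conjTau_repr (p q : ℚ) : conjTau ((p:ℝ) + q * gold) = (p:ℝ) + q * (1 - gold) := by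
  have h : ∃ p' q' : ℚ, (p:ℝ) + q * gold = (p' : ℝ) + (q' : ℝ) * gold := ⟨p, q, rfl⟩
  rw [conjTau, dif_pos h]
  obtain ⟨h1, h2⟩ := gold_repr_unique (Classical.choose_spec (Classical.choose_spec h)).symm
  rw [h2, h1]








lemma MF_coords {v : E3} (hv : v ∈ MF) :
    ∃ m n : Fin 3 → ℤ, ∀ i, v i = (m i : ℝ) + (n i : ℝ) * gold := by
  obtain ⟨a, b, c, ⟨m1, n1, ha⟩, ⟨m2, n2, hb⟩, ⟨m3, n3, hc⟩, hsum⟩ := hv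
  refine ⟨![2*m1+m2+n2, n2, m2+2*m3], ![2*n1+m2+2*n2, m2+n2, n2+2*n3], fun i => ?_⟩
  subst ha hb hc hsum
  fin_cases i <;>
    simp [PiLp.add_apply, PiLp.smul_apply, Matrix.cons_val_zero, Matrix.cons_val_one,
      Matrix.head_cons] <;>
    push_cast <;>
    first
      | linear_combination (n2 : ℝ) * mgold_sq
      | linear_combination (-n2 : ℝ) * mgold_sq
      | ring

lemma Lset_coords {α : E3} (hα : α ∈ Lset) :
    ∃ m n : Fin 3 → ℤ, ∀ i, α i = ((m i : ℝ) + (n i : ℝ) * gold) / 2 := by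
  obtain ⟨m, n, h⟩ := MF_coords hα
  refine ⟨m, n, fun i => ?_⟩
  have h2 : ((2:ℝ) • α) i = 2 * α i := rfl
  have := h i
  rw [h2] at this
  linarith

lemma abs_coord_le_norm (x : E3) (i : Fin 3) : |x i| ≤ ‖x‖ := by
  have h : |x i| ^ 2 ≤ ∑ j, ‖x j‖ ^ 2 := by
    have : ‖x i‖ ^ 2 ≤ ∑ j, ‖x j‖ ^ 2 :=
      Finset.single_le_sum (f := fun j => ‖x j‖ ^ 2) (fun j _ => sq_nonneg _)
        (Finset.mem_univ i)
    simpa [Real.norm_eq_abs] using this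
  calc |x i| = Real.sqrt (|x i| ^ 2) := by rw [Real.sqrt_sq (abs_nonneg _)]
    _ ≤ Real.sqrt (∑ j, ‖x j‖ ^ 2) := Real.sqrt_le_sqrt h
    _ = ‖x‖ := (EuclideanSpace.norm_eq x).symm

lemma two_gold_sub_one : 2 * gold - 1 = Real.sqrt 5 := by unfold gold; ring

lemma modelSet_inter_finite (t : E3) (W : Set E3) (hW : IsWindow W) (R : ℝ) :
    (modelSet t W ∩ Metric.closedBall 0 R).Finite := by
  obtain ⟨-, hWsub, hWcpt⟩ := hW
  obtain ⟨R2, hR2⟩ := hWcpt.isBounded.subset_closedBall 0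
  set R1 : ℝ := R + ‖t‖ with hR1def
  set N : ℤ := ⌈4*R1 + 4*R2 + 8⌉ with hNdef
  set S : Set ((Fin 3 → ℤ) × (Fin 3 → ℤ)) :=
    ((Set.univ.pi fun _ : Fin 3 => Set.Icc (-N) N) ×ˢ
      (Set.univ.pi fun _ : Fin 3 => Set.Icc (-N) N)) with hSdef
  have hSfin : S.Finite :=
    (Set.Finite.pi fun _ => Set.finite_Icc _ _).prod (Set.Finite.pi fun _ => Set.finite_Icc _ _)
  set Φ : ((Fin 3 → ℤ) × (Fin 3 → ℤ)) → E3 :=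
    fun p => t + (show E3 from WithLp.toLp 2 (fun i => ((p.1 i : ℝ) + (p.2 i : ℝ) * gold) / 2)) with hΦdef
  refine ((hSfin.image Φ).subset ?_)
  rintro x ⟨⟨α, hαL, hαW, rfl⟩, hball⟩
  obtain ⟨m, n, hc⟩ := Lset_coords hαL
  have hα1 : ‖α‖ ≤ R1 := by
    have hx : ‖t + α‖ ≤ R := by simpa [Metric.mem_closedBall, dist_zero_right] using hball
    have : ‖α‖ = ‖t + α - t‖ := by congr 1; abel
    rw [this]
    calc ‖t + α - t‖ ≤ ‖t + α‖ + ‖t‖ := norm_sub_le _ _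
      _ ≤ R + ‖t‖ := by linarith
  have hα2 : ‖starMap α‖ ≤ R2 := by
    have := hR2 (hWsub hαW)
    simpa [Metric.mem_closedBall, dist_zero_right] using this
  have hstar : ∀ i, (starMap α) i = ((m i : ℝ) + (n i : ℝ) * (1 - gold)) / 2 := by
    intro i
    have : (starMap α) i = conjTau (α i) := rfl
    rw [this, hc i]
    have hrw : ((m i : ℝ) + (n i : ℝ) * gold) / 2 =
        ((((m i : ℚ)/2 : ℚ)) : ℝ) + ((((n i : ℚ)/2 : ℚ)) : ℝ) * gold := by push_cast; ring
    rw [hrw, conjTau_repr]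
    push_cast; ring
  have hb1 : ∀ i, |(m i : ℝ) + (n i : ℝ) * gold| ≤ 2 * R1 := by
    intro i
    have h1 := abs_coord_le_norm α i
    rw [hc i] at h1
    rw [abs_div] at h1
    have : |(2:ℝ)| = 2 := by norm_num
    rw [this] at h1
    linarith
  have hb2 : ∀ i, |(m i : ℝ) + (n i : ℝ) * (1 - gold)| ≤ 2 * R2 := by
    intro i
    have h1 := abs_coord_le_norm (starMap α) i
    rw [hstar i] at h1
    rw [abs_div] at h1
    have : |(2:ℝ)| = 2 := by norm_num
    rw [this] at h1
    linarith
  have hR1nn : 0 ≤ R1 := le_trans (norm_nonneg α) hα1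
  have hR2nn : 0 ≤ R2 := le_trans (norm_nonneg _) hα2
  have hnbd : ∀ i, |(n i : ℝ)| ≤ R1 + R2 := by
    intro i
    have key : (n i : ℝ) * (2 * gold - 1) =
        ((m i : ℝ) + (n i : ℝ) * gold) - ((m i : ℝ) + (n i : ℝ) * (1 - gold)) := by ring
    have h5 : |(n i : ℝ)| * 2 ≤ |(n i : ℝ)| * Real.sqrt 5 :=
      mul_le_mul_of_nonneg_left sqrt5_ge_two (abs_nonneg _)
    have : |(n i : ℝ) * (2 * gold - 1)| ≤ 2 * R1 + 2 * R2 := by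
      rw [key]
      calc |_ - _| ≤ |(m i : ℝ) + (n i : ℝ) * gold| + |(m i : ℝ) + (n i : ℝ) * (1 - gold)| :=
            abs_sub _ _
        _ ≤ 2 * R1 + 2 * R2 := add_le_add (hb1 i) (hb2 i)
    rw [abs_mul, two_gold_sub_one] at this
    have h5' : |Real.sqrt 5| = Real.sqrt 5 := abs_of_nonneg (Real.sqrt_nonneg _)
    rw [h5'] at this
    linarith
  have hmbd : ∀ i, |(m i : ℝ)| ≤ 4*R1 + 4*R2 + 8 := by
    intro i
    have h1 := hb1 i
    have h2 := hnbd i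
    have : |(m i : ℝ)| ≤ |(m i : ℝ) + (n i : ℝ) * gold| + |(n i : ℝ) * gold| := by
      have := abs_sub ((m i : ℝ) + (n i : ℝ) * gold) ((n i : ℝ) * gold)
      simpa using this
    have hg : |(n i : ℝ) * gold| ≤ (R1 + R2) * 2 := by
      rw [abs_mul, abs_of_nonneg (le_of_lt mgold_pos)]
      exact mul_le_mul h2 gold_le_two (le_of_lt mgold_pos) (by linarith)
    linarith
  refine ⟨(m, n), ?_, ?_⟩
  · constructor
    · intro i _
      have : |(m i : ℝ)| ≤ (N : ℝ) := le_trans (hmbd i) (Int.le_ceil _)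
      have habs : |m i| ≤ N := by rw [← Int.cast_abs] at this; exact_mod_cast this
      exact Set.mem_Icc.mpr (abs_le.mp habs)
    · intro i _
      have h' : |(n i : ℝ)| ≤ (N : ℝ) := by
        refine le_trans (hnbd i) (le_trans ?_ (Int.le_ceil _))
        linarith
      have habs : |n i| ≤ N := by rw [← Int.cast_abs] at h'; exact_mod_cast h'
      exact Set.mem_Icc.mpr (abs_le.mp habs)
  · symm
    show t + α = Φ (m, n)
    rw [hΦdef]
    congr 1
    ext i
    exact hc i

def det2 (v w : ℝ × ℝ) : ℝ := v.1 * w.2 - v.2 * w.1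

def kap (v : ℝ × ℝ) : ℝ :=
  if 0 < v.2 then -v.1 / (|v.1| + v.2) else -2 + v.1 / (|v.1| - v.2)

lemma kap_mem_pos {v : ℝ × ℝ} (h : 0 < v.2) : -1 < kap v ∧ kap v < 1 := by
  rw [kap, if_pos h]
  have hA : 0 < |v.1| + v.2 := by have := abs_nonneg v.1; linarith
  have habs : |(-v.1) / (|v.1| + v.2)| < 1 := by
    rw [abs_div, abs_neg, abs_of_pos hA]
    exact (div_lt_one hA).mpr (by linarith)
  have := abs_lt.mp habs
  constructor <;> [linarith [this.1]; linarith [this.2]]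

lemma kap_mem_neg {v : ℝ × ℝ} (h : v.2 < 0) : -3 < kap v ∧ kap v < -1 := by
  rw [kap, if_neg (by linarith)]
  have hA : 0 < |v.1| - v.2 := by have := abs_nonneg v.1; linarith
  have habs : |v.1 / (|v.1| - v.2)| < 1 := by
    rw [abs_div, abs_of_pos hA]
    exact (div_lt_one hA).mpr (by linarith)
  have := abs_lt.mp habs
  constructor <;> [linarith [this.1]; linarith [this.2]]

lemma kap_bounds {v : ℝ × ℝ} (h : v.2 ≠ 0) : -3 < kap v ∧ kap v < 1 := by
  rcases h.lt_or_gt with h | h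
  · have := kap_mem_neg h; exact ⟨this.1, by linarith [this.2]⟩
  · have := kap_mem_pos h; exact ⟨by linarith [this.1], this.2⟩

set_option maxHeartbeats 1600000 in
/-- The fundamental comparison lemma: positivity of `det2` in terms of the
pseudo-angle `kap`. -/
lemma det2_pos_iff {v w : ℝ × ℝ} (hv : v.2 ≠ 0) (hw : w.2 ≠ 0) :
    0 < det2 v w ↔ (kap v < kap w ∧ kap w < kap v + 2) ∨ kap w < kap v - 2 := by
  rcases hv.lt_or_gt with hv2 | hv2 <;> rcases hw.lt_or_gt with hw2 | hw2
  · -- v lower, w lower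
    obtain ⟨hb1, hb2⟩ := kap_mem_neg hv2
    obtain ⟨hb3, hb4⟩ := kap_mem_neg hw2
    have hA : 0 < |v.1| - v.2 := by have := abs_nonneg v.1; linarith
    have hB : 0 < |w.1| - w.2 := by have := abs_nonneg w.1; linarith
    have hcore : kap v < kap w ↔ 0 < det2 v w := by
      rw [kap, if_neg (by linarith), kap, if_neg (by linarith), add_lt_add_iff_left,
        div_lt_div_iff₀ hA hB, det2]
      rcases abs_cases v.1 with ⟨h1, h1'⟩ | ⟨h1, h1'⟩ <;>
        rcases abs_cases w.1 with ⟨h2, h2'⟩ | ⟨h2, h2'⟩ <;> rw [h1, h2] <;>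
        constructor <;> intro hh <;> nlinarith [sq_nonneg v.1, sq_nonneg w.1, sq_nonneg (v.1 + w.1), sq_nonneg (v.1 - w.1)]
    constructor
    · intro h; exact Or.inl ⟨hcore.mpr h, by linarith⟩
    · rintro (⟨h1, -⟩ | h3)
      · exact hcore.mp h1
      · linarith
  · -- v lower, w upper
    obtain ⟨hb1, hb2⟩ := kap_mem_neg hv2
    obtain ⟨hb3, hb4⟩ := kap_mem_pos hw2
    have hA : 0 < |v.1| - v.2 := by have := abs_nonneg v.1; linarith
    have hB : 0 < |w.1| + w.2 := by have := abs_nonneg w.1; linarith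
    have hcore : kap w < kap v + 2 ↔ 0 < det2 v w := by
      rw [kap, if_pos hw2, kap, if_neg (show ¬ 0 < v.2 by linarith)]
      have : -w.1 / (|w.1| + w.2) < -2 + v.1 / (|v.1| - v.2) + 2 ↔
          -w.1 / (|w.1| + w.2) < v.1 / (|v.1| - v.2) := by constructor <;> intro <;> linarith
      rw [this, div_lt_div_iff₀ hB hA, det2]
      rcases abs_cases v.1 with ⟨h1, h1'⟩ | ⟨h1, h1'⟩ <;>
        rcases abs_cases w.1 with ⟨h2, h2'⟩ | ⟨h2, h2'⟩ <;> rw [h1, h2] <;>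
        constructor <;> intro hh <;> nlinarith [sq_nonneg v.1, sq_nonneg w.1, sq_nonneg (v.1 + w.1), sq_nonneg (v.1 - w.1)]
    constructor
    · intro h; exact Or.inl ⟨by linarith, hcore.mpr h⟩
    · rintro (⟨-, h2⟩ | h3)
      · exact hcore.mp h2
      · linarith
  · -- v upper, w lower
    obtain ⟨hb1, hb2⟩ := kap_mem_pos hv2
    obtain ⟨hb3, hb4⟩ := kap_mem_neg hw2
    have hA : 0 < |v.1| + v.2 := by have := abs_nonneg v.1; linarith
    have hB : 0 < |w.1| - w.2 := by have := abs_nonneg w.1; linarith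
    have hcore : kap w < kap v - 2 ↔ 0 < det2 v w := by
      rw [kap, if_neg (show ¬ 0 < w.2 by linarith), kap, if_pos hv2]
      have : -2 + w.1 / (|w.1| - w.2) < -v.1 / (|v.1| + v.2) - 2 ↔
          w.1 / (|w.1| - w.2) < -v.1 / (|v.1| + v.2) := by constructor <;> intro <;> linarith
      rw [this, div_lt_div_iff₀ hB hA, det2]
      rcases abs_cases v.1 with ⟨h1, h1'⟩ | ⟨h1, h1'⟩ <;>
        rcases abs_cases w.1 with ⟨h2, h2'⟩ | ⟨h2, h2'⟩ <;> rw [h1, h2] <;>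
        constructor <;> intro hh <;> nlinarith [sq_nonneg v.1, sq_nonneg w.1, sq_nonneg (v.1 + w.1), sq_nonneg (v.1 - w.1)]
    constructor
    · intro h; exact Or.inr (hcore.mpr h)
    · rintro (⟨h1, -⟩ | h3)
      · linarith
      · exact hcore.mp h3
  · -- v upper, w upper
    obtain ⟨hb1, hb2⟩ := kap_mem_pos hv2
    obtain ⟨hb3, hb4⟩ := kap_mem_pos hw2
    have hA : 0 < |v.1| + v.2 := by have := abs_nonneg v.1; linarith
    have hB : 0 < |w.1| + w.2 := by have := abs_nonneg w.1; linarith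
    have hcore : kap v < kap w ↔ 0 < det2 v w := by
      rw [kap, if_pos hv2, kap, if_pos hw2, div_lt_div_iff₀ hA hB, det2]
      rcases abs_cases v.1 with ⟨h1, h1'⟩ | ⟨h1, h1'⟩ <;>
        rcases abs_cases w.1 with ⟨h2, h2'⟩ | ⟨h2, h2'⟩ <;> rw [h1, h2] <;>
        constructor <;> intro hh <;> nlinarith [sq_nonneg v.1, sq_nonneg w.1, sq_nonneg (v.1 + w.1), sq_nonneg (v.1 - w.1)]
    constructor
    · intro h; exact Or.inl ⟨hcore.mpr h, by linarith⟩
    · rintro (⟨h1, -⟩ | h3)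
      · exact hcore.mp h1
      · linarith

lemma det2_neg (v w : ℝ × ℝ) : det2 w v = -det2 v w := by unfold det2; ring

/-- If `det2 v w = 0` and `v ≠ 0` then `w` is a multiple of `v`. -/
lemma det2_dep {v w : ℝ × ℝ} (hv : v ≠ 0) (h : det2 v w = 0) : ∃ μ : ℝ, w = μ • v := by
  unfold det2 at h
  by_cases h1 : v.1 = 0
  · have h2 : v.2 ≠ 0 := by
      intro h2; exact hv (Prod.ext h1 h2)
    refine ⟨w.2 / v.2, ?_⟩
    have hw1 : w.1 = v.1 * w.2 / v.2 := by field_simp; nlinarith [h]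
    apply Prod.ext <;> simp [Prod.smul_fst, Prod.smul_snd, smul_eq_mul]
    · rw [hw1, h1]; ring
    · field_simp
  · refine ⟨w.1 / v.1, ?_⟩
    apply Prod.ext <;> simp [Prod.smul_fst, Prod.smul_snd, smul_eq_mul]
    · field_simp
    · field_simp; nlinarith [h]

/-- Points with equal pseudo-angle are positive multiples of one another. -/
lemma kap_inj {v w : ℝ × ℝ} (hv : v.2 ≠ 0) (hw : w.2 ≠ 0) (h : kap v = kap w) :
    ∃ c : ℝ, 0 < c ∧ w = c • v := by
  have h1 : ¬ (0 < det2 v w) := by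
    rw [det2_pos_iff hv hw]
    push_neg
    refine ⟨fun h' => absurd h (ne_of_lt h'), by rw [h]; linarith⟩
  have h2 : ¬ (0 < det2 w v) := by
    rw [det2_pos_iff hw hv]
    push_neg
    refine ⟨fun h' => absurd h.symm (ne_of_lt h'), by rw [h]; linarith⟩
  rw [det2_neg] at h2
  have hdet : det2 v w = 0 := by push_neg at h1 h2; linarith
  have hv0 : v ≠ 0 := by intro h0; rw [h0] at hv; exact hv rfl
  obtain ⟨μ, hμ⟩ := det2_dep hv0 hdet
  have hw2 : w.2 = μ * v.2 := by rw [hμ]; simp [Prod.smul_snd, smul_eq_mul]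
  have hsame : 0 < μ := by
    -- v.2 and w.2 have the same sign since kap v = kap w
    rcases hv.lt_or_gt with hv2 | hv2 <;> rcases hw.lt_or_gt with hw2' | hw2'
    · rcases lt_trichotomy μ 0 with hμ0 | hμ0 | hμ0
      · nlinarith
      · exfalso; rw [hμ0] at hw2; simp at hw2; exact hw (by linarith)
      · exact hμ0
    · exfalso
      have := (kap_mem_neg hv2).2; have := (kap_mem_pos hw2').1; linarith
    · exfalso
      have := (kap_mem_pos hv2).1; have := (kap_mem_neg hw2').2; linarith
    · rcases lt_trichotomy μ 0 with hμ0 | hμ0 | hμ0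
      · nlinarith
      · exfalso; rw [hμ0] at hw2; simp at hw2; exact hw (by linarith)
      · exact hμ0
  exact ⟨μ, hsame, hμ⟩

/-- Cramer identity in the plane. -/
lemma cramer2 (X Y Z : ℝ × ℝ) : det2 X Y • Z = det2 Z Y • X + det2 X Z • Y := by
  apply Prod.ext <;> simp [det2, Prod.smul_fst, Prod.smul_snd, smul_eq_mul] <;> ring

lemma sigma_formula (X Y Z : ℝ × ℝ) :
    det2 (Y - X) (Z - X) = det2 X Y - det2 Z Y - det2 X Z := by
  simp [det2, Prod.fst_sub, Prod.snd_sub]; ring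

lemma kap_smul_neg_pos {v : ℝ × ℝ} (h2 : 0 < v.2) {c : ℝ} (hc : c < 0) :
    kap (c • v) = kap v - 2 := by
  have hsnd : (c • v).2 = c * v.2 := rfl
  have hfst : (c • v).1 = c * v.1 := rfl
  have hneg : ¬ 0 < (c • v).2 := by rw [hsnd]; nlinarith
  rw [kap, if_neg hneg, kap, if_pos h2, hsnd, hfst]
  have habs : |c * v.1| = -c * |v.1| := by rw [abs_mul, abs_of_neg hc]
  rw [habs]
  have hden : -c * |v.1| - c * v.2 = -c * (|v.1| + v.2) := by ring
  have hnum : c * v.1 = -c * (-v.1) := by ring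
  rw [hden, hnum, mul_div_mul_left _ _ (by linarith : (-c) ≠ 0)]
  ring

lemma kap_smul_neg_neg {v : ℝ × ℝ} (h2 : v.2 < 0) {c : ℝ} (hc : c < 0) :
    kap (c • v) = kap v + 2 := by
  have hsnd : (c • v).2 = c * v.2 := rfl
  have hfst : (c • v).1 = c * v.1 := rfl
  have hpos : 0 < (c • v).2 := by rw [hsnd]; nlinarith
  rw [kap, if_pos hpos, kap, if_neg (show ¬ 0 < v.2 by linarith), hsnd, hfst]
  have habs : |c * v.1| = -c * |v.1| := by rw [abs_mul, abs_of_neg hc]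
  rw [habs]
  have hden : -c * |v.1| + c * v.2 = -c * (|v.1| - v.2) := by ring
  have hnum : -(c * v.1) = -c * v.1 := by ring
  rw [hnum, hden, show (-c : ℝ) * v.1 = -c * v.1 from rfl,
    mul_div_mul_left _ _ (by linarith : (-c) ≠ 0)]
  ring

lemma det2_sub_right (v w₁ w₂ : ℝ × ℝ) : det2 v (w₁ - w₂) = det2 v w₁ - det2 v w₂ := by
  simp [det2]; ring

lemma det2_add_right (v w₁ w₂ : ℝ × ℝ) : det2 v (w₁ + w₂) = det2 v w₁ + det2 v w₂ := by
  simp [det2]; ring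

lemma det2_smul_right (v w : ℝ × ℝ) (s : ℝ) : det2 v (s • w) = s * det2 v w := by
  simp [det2]; ring

lemma det2_smul_left (v w : ℝ × ℝ) (s : ℝ) : det2 (s • v) w = s * det2 v w := by
  simp [det2]; ring


lemma det2_sub_left (v₁ v₂ w : ℝ × ℝ) : det2 (v₁ - v₂) w = det2 v₁ w - det2 v₂ w := by
  simp [det2]; ring

lemma det2_add_left (v₁ v₂ w : ℝ × ℝ) : det2 (v₁ + v₂) w = det2 v₁ w + det2 v₂ w := by
  simp [det2]; ring

lemma det2_self (v : ℝ × ℝ) : det2 v v = 0 := by simp [det2]; ring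

lemma det2_zero_right (v : ℝ × ℝ) : det2 v 0 = 0 := by simp [det2]

lemma openSegment_mem' {a b pt : E3} {μ : ℝ} (h0 : 0 < μ) (h1 : μ < 1)
    (h : pt = a + μ • (b - a)) : pt ∈ openSegment ℝ a b :=
  ⟨1 - μ, μ, by linarith, h0, by ring, by rw [h]; module⟩

/-- No three distinct points of an extreme-point configuration are collinear. -/
lemma no_three {P : Set E3}
    (hext' : ∀ x ∈ P, ∀ a ∈ convexHull ℝ P, ∀ b ∈ convexHull ℝ P,
      x ∈ openSegment ℝ a b → a = x ∧ b = x) :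
    ∀ x ∈ P, ∀ y ∈ P, ∀ z ∈ P, x ≠ y → z ≠ x → z ≠ y →
      ∀ s : ℝ, z - x = s • (y - x) → False := by
  intro x hx y hy z hz hxy hzx hzy s hs
  have hPK : P ⊆ convexHull ℝ P := subset_convexHull ℝ P
  have hzeq : z = x + s • (y - x) := by rw [← hs]; abel
  rcases lt_trichotomy s 0 with hs0 | hs0 | hs0
  · -- z beyond x : x ∈ openSegment z y
    have hν0 : 0 < s / (s - 1) := div_pos_of_neg_of_neg hs0 (by linarith)
    have hν1 : s / (s - 1) < 1 := by
      rw [div_lt_iff_of_neg (by linarith : s - 1 < 0)]; linarith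
    have h1 : y - z = (1 - s) • (y - x) := by rw [hzeq]; module
    have hxeq : x = z + (s / (s - 1)) • (y - z) := by
      rw [h1, smul_smul, show s / (s - 1) * (1 - s) = -s by rw [div_mul_eq_mul_div, div_eq_iff (by linarith : s - 1 ≠ 0)]; ring, hzeq]; module
    have := hext' x hx z (hPK hz) y (hPK hy) (openSegment_mem' hν0 hν1 hxeq)
    exact hzx this.1
  · exact hzx (by rw [hzeq, hs0]; simp)
  · rcases lt_trichotomy s 1 with hs1 | hs1 | hs1
    · have := hext' z hz x (hPK hx) y (hPK hy) (openSegment_mem' hs0 hs1 hzeq)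
      exact hzx this.1.symm
    · exact hzy (by rw [hzeq, hs1, one_smul]; abel)
    · have hy' : y = x + (1/s) • (z - x) := by
        rw [hs, smul_smul, one_div_mul_cancel (by linarith : s ≠ 0), one_smul]; abel
      have := hext' y hy x (hPK hx) z (hPK hz)
        (openSegment_mem' (by positivity) (by rw [div_lt_one (by linarith)]; linarith) hy')
      exact hxy this.1
/-- No two distinct points of the configuration are on a common ray from `o`. -/
lemma no_ray {P : Set E3}
    (hext' : ∀ x ∈ P, ∀ a ∈ convexHull ℝ P, ∀ b ∈ convexHull ℝ P,
      x ∈ openSegment ℝ a b → a = x ∧ b = x)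
    {o : E3} (hoK : o ∈ convexHull ℝ P) (honP : o ∉ P) :
    ∀ z ∈ P, ∀ w ∈ P, w ≠ z → ∀ c : ℝ, 0 < c → w - o = c • (z - o) → False := by
  intro z hz w hw hwz c hc hweq
  have hPK : P ⊆ convexHull ℝ P := subset_convexHull ℝ P
  have hw' : w = o + c • (z - o) := by rw [← hweq]; abel
  rcases lt_trichotomy c 1 with hc1 | hc1 | hc1
  · have := hext' w hw o hoK z (hPK hz) (openSegment_mem' hc hc1 hw')
    exact honP (this.1 ▸ hw)
  · exact hwz (by rw [hw', hc1, one_smul]; abel)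
  · have hz' : z = o + (1/c) • (w - o) := by
      rw [hweq, smul_smul, one_div_mul_cancel (by linarith : c ≠ 0), one_smul]; abel
    have := hext' z hz o hoK w (hPK hw)
      (openSegment_mem' (by positivity) (by rw [div_lt_one (by linarith)]; linarith) hz')
    exact honP (this.1 ▸ hz)

set_option maxHeartbeats 4000000 in
/-- Per-chord parity: the number of configuration points whose pseudo-angle lies strictly
between those of the chord endpoints `x` and `y = M x` is even. -/
lemma chord_even
    {P : Set E3} (hfin : P.Finite)
    (hext' : ∀ x ∈ P, ∀ a ∈ convexHull ℝ P, ∀ b ∈ convexHull ℝ P,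
      x ∈ openSegment ℝ a b → a = x ∧ b = x)
    {o : E3} (hoK : o ∈ convexHull ℝ P) (honP : o ∉ P)
    {Wsub : Submodule ℝ E3}
    (hWK : ∀ z ∈ convexHull ℝ P, ∀ w ∈ convexHull ℝ P, z - w ∈ Wsub)
    {cmap : E3 →ₗ[ℝ] ℝ × ℝ}
    (hkerW : ∀ w ∈ Wsub, cmap w = 0 → w = 0)
    (hc2 : ∀ z ∈ P, (cmap (z - o)).2 ≠ 0)
    {u : E3} {M : E3 → E3}
    (hM1 : ∀ z ∈ P, M z ∈ P) (hM2 : ∀ z ∈ P, M z ≠ z)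
    (hM3 : ∀ z ∈ P, ∃ r' : ℝ, M z = z + r' • u)
    (hMuniq : ∀ z ∈ P, ∀ w ∈ P, w ≠ z → (∃ r' : ℝ, w = z + r' • u) → w = M z)
    {x y : E3} (hx : x ∈ P) (hy : y = M x)
    (hklt : kap (cmap (x - o)) < kap (cmap (y - o))) :
    Even ((hfin.toFinset.filter (fun z =>
      kap (cmap (x - o)) < kap (cmap (z - o)) ∧
      kap (cmap (z - o)) < kap (cmap (y - o)))).card) := by
  classical
  have hPK : P ⊆ convexHull ℝ P := subset_convexHull ℝ P
  have hy' : y ∈ P := hy ▸ hM1 x hx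
  have hyx : y ≠ x := hy ▸ hM2 x hx
  have hinj : ∀ z ∈ convexHull ℝ P, ∀ w ∈ convexHull ℝ P,
      cmap (z - o) = cmap (w - o) → z = w := by
    intro z hz w hw heq
    have h0 : cmap (z - w) = 0 := by
      rw [← sub_sub_sub_cancel_right z w o, map_sub, heq, sub_self]
    exact sub_eq_zero.mp (hkerW _ (hWK z hz w hw) h0)
  have hzray : ∀ z ∈ P, ∀ w ∈ P, w ≠ z → ∀ lam : ℝ, 0 < lam →
      cmap (w - o) = lam • cmap (z - o) → False := by
    intro z hz w hw hwz lam hlam heq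
    have h0 : cmap ((w - o) - lam • (z - o)) = 0 := by
      rw [map_sub, map_smul, heq]; simp
    have hmem : (w - o) - lam • (z - o) ∈ Wsub :=
      Submodule.sub_mem _ (hWK w (hPK hw) o hoK)
        (Submodule.smul_mem _ _ (hWK z (hPK hz) o hoK))
    have := sub_eq_zero.mp (hkerW _ hmem h0)
    exact no_ray hext' hoK honP z hz w hw hwz lam hlam this
  have hkeyne : ∀ z ∈ P, ∀ w ∈ P, w ≠ z →
      kap (cmap (w - o)) ≠ kap (cmap (z - o)) := by
    intro z hz w hw hwz heq
    obtain ⟨c, hc, hceq⟩ := kap_inj (hc2 w hw) (hc2 z hz) heq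
    exact hzray w hw z hz (Ne.symm hwz) c hc hceq
  have hMinvx : M y = x := by
    obtain ⟨r, hr⟩ := hM3 x hx
    refine (hMuniq y hy' x hx (Ne.symm hyx) ⟨-r, ?_⟩).symm
    rw [hy, hr]; module
  obtain ⟨r, hr0⟩ := hM3 x hx
  have hr : y = x + r • u := hy ▸ hr0
  have hrne : r ≠ 0 := by
    intro h; apply hyx; rw [hr, h]; simp
  set X := cmap (x - o) with hXdef
  set Y := cmap (y - o) with hYdef
  have hXne : Y - X ≠ 0 := by
    intro h
    exact hyx (hinj y (hPK hy') x (hPK hx) (sub_eq_zero.mp h))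
  set sg : E3 → ℝ := fun z => det2 (Y - X) (cmap (z - o) - X) with hsgdef
  have hlift : ∀ p ∈ convexHull ℝ P, ∀ q ∈ convexHull ℝ P, ∀ μ : ℝ,
      cmap (p - o) - cmap (q - o) = μ • (Y - X) → p - q = μ • (y - x) := by
    intro p hp q hq μ heq
    have h0 : cmap ((p - q) - μ • (y - x)) = 0 := by
      have h1 : cmap ((p - o) - (q - o) - μ • ((y - o) - (x - o)))
          = cmap (p - o) - cmap (q - o) - μ • (cmap (y - o) - cmap (x - o)) := by
        simp only [map_sub, map_smul]
      rw [show (p - q) - μ • (y - x) = (p - o) - (q - o) - μ • ((y - o) - (x - o)) by module,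
        h1, heq, ← hYdef, ← hXdef, sub_self]
    have hmem : (p - q) - μ • (y - x) ∈ Wsub :=
      Submodule.sub_mem _ (hWK p hp q hq)
        (Submodule.smul_mem _ _ (hWK y (hPK hy') x (hPK hx)))
    exact sub_eq_zero.mp (hkerW _ hmem h0)
  have hsgne : ∀ z ∈ P, z ≠ x → z ≠ y → sg z ≠ 0 := by
    intro z hz hzx hzy h0
    obtain ⟨μ, hμ⟩ := det2_dep hXne h0
    have := hlift z (hPK hz) x (hPK hx) μ hμ
    exact no_three hext' x hx y hy' z hz (Ne.symm hyx) hzx hzy μ this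
  have hsgM : ∀ z ∈ P, sg (M z) = sg z := by
    intro z hz
    obtain ⟨r', hr'⟩ := hM3 z hz
    have hdiff : cmap (M z - o) - cmap (z - o) = (r'/r) • (Y - X) := by
      have h1 : M z - z = (r'/r) • (y - x) := by
        rw [hr', hr]
        have h2 : (r'/r) • ((x + r • u) - x) = r' • u := by
          rw [show (x + r • u) - x = r • u by abel, smul_smul, div_mul_cancel₀ _ hrne]
        rw [h2]; abel
      calc cmap (M z - o) - cmap (z - o) = cmap (M z - z) := by
            rw [← map_sub, sub_sub_sub_cancel_right]
        _ = (r'/r) • (Y - X) := by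
            rw [h1, map_smul, hYdef, hXdef, ← map_sub, sub_sub_sub_cancel_right]
    simp only [hsgdef]
    have h3 : cmap (M z - o) - X = (cmap (z - o) - X) + (r'/r) • (Y - X) := by
      have := hdiff; rw [sub_eq_iff_eq_add] at this; rw [this]; abel
    rw [h3, det2_add_right, det2_smul_right, det2_self, mul_zero, add_zero]
  have hMinv : ∀ z ∈ P, M (M z) = z := by
    intro z hz
    obtain ⟨r', hr'⟩ := hM3 z hz
    exact (hMuniq (M z) (hM1 z hz) z hz (Ne.symm (hM2 z hz)) ⟨-r', by rw [hr']; module⟩).symm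
  have evenside : ∀ Q : ℝ → Prop,
      Even ((hfin.toFinset.filter (fun z => z ≠ x ∧ z ≠ y ∧ Q (sg z))).card) := by
    intro Q
    set T := hfin.toFinset.filter (fun z => z ≠ x ∧ z ≠ y ∧ Q (sg z)) with hT
    have hTmem : ∀ z, z ∈ T ↔ z ∈ P ∧ z ≠ x ∧ z ≠ y ∧ Q (sg z) := by
      intro z; simp [hT, Finset.mem_filter, hfin.mem_toFinset]
    have hMT : ∀ z ∈ T, M z ∈ T := by
      intro z hzT
      obtain ⟨hz, hzx, hzy, hQ⟩ := (hTmem z).mp hzT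
      refine (hTmem (M z)).mpr ⟨hM1 z hz, ?_, ?_, by rw [hsgM z hz]; exact hQ⟩
      · intro h
        apply hzy
        calc z = M (M z) := (hMinv z hz).symm
          _ = M x := by rw [h]
          _ = y := hy.symm
      · intro h
        apply hzx
        calc z = M (M z) := (hMinv z hz).symm
          _ = M y := by rw [h]
          _ = x := hMinvx
    set f : E3 → ℝ := fun z => det2 (Y - X) (cmap (z - o)) with hf
    have hfM : ∀ z ∈ P, f (M z) = f z := by
      intro z hz
      have h1 := hsgM z hz
      simp only [hsgdef, det2_sub_right] at h1
      simp only [hf]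
      linarith
    have hfiber : ∀ z ∈ T, T.filter (fun w => f w = f z) = {z, M z} := by
      intro z hzT
      obtain ⟨hz, hzx, hzy, hQ⟩ := (hTmem z).mp hzT
      apply Finset.ext
      intro w
      simp only [Finset.mem_filter, Finset.mem_insert, Finset.mem_singleton]
      constructor
      · rintro ⟨hwT, hfw⟩
        obtain ⟨hw, hwx, hwy, hQw⟩ := (hTmem w).mp hwT
        by_cases hwz : w = z
        · exact Or.inl hwz
        · refine Or.inr ?_
          have hdet0 : det2 (Y - X) (cmap (w - o) - cmap (z - o)) = 0 := by
            rw [det2_sub_right]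
            simp only [hf] at hfw
            rw [hfw, sub_self]
          obtain ⟨μ, hμ⟩ := det2_dep hXne hdet0
          have hwzlift : w - z = μ • (y - x) := hlift w (hPK hw) z (hPK hz) μ hμ
          have hwline : w = z + (μ * r) • u := by
            have h4 : μ • (y - x) = (μ * r) • u := by
              rw [hr, show (x + r • u) - x = r • u by abel, smul_smul]
            rw [← h4, ← hwzlift]; abel
          exact hMuniq z hz w hw hwz ⟨μ * r, hwline⟩
      · rintro (rfl | rfl)
        · exact ⟨hzT, rfl⟩
        · exact ⟨hMT z hzT, hfM z hz⟩
    have hcardT : T.card = (T.image f).card * 2 := by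
      rw [Finset.card_eq_sum_card_fiberwise (f := f) (t := T.image f)
        (fun w hw => Finset.mem_image_of_mem f hw)]
      rw [Finset.sum_congr rfl (fun b hb => ?_), Finset.sum_const, smul_eq_mul]
      obtain ⟨z, hzT, hfz⟩ := Finset.mem_image.mp hb
      have h5 : T.filter (fun a => f a = b) = T.filter (fun w => f w = f z) := by
        rw [hfz]
      rw [h5, hfiber z hzT]
      have hMzz : M z ≠ z := hM2 z (((hTmem z).mp hzT).1)
      rw [Finset.card_insert_of_notMem (by simp [Ne.symm hMzz]), Finset.card_singleton]
    exact ⟨(T.image f).card, by rw [hcardT]; ring⟩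
  -- the convexity claims
  set D := det2 X Y with hD
  have hXZdecomp : ∀ z : E3, sg z = D - det2 (cmap (z - o)) Y - det2 X (cmap (z - o)) := by
    intro z
    simp only [hsgdef, hD]
    rw [sigma_formula]
  have claimA : ∀ z ∈ P, z ≠ x → z ≠ y → sg z * D < 0 →
      0 < det2 (cmap (z - o)) Y * D ∧ 0 < det2 X (cmap (z - o)) * D := by
    intro z hz hzx hzy hprod
    have hD0 : D ≠ 0 := by intro h; rw [h, mul_zero] at hprod; exact lt_irrefl _ hprod
    have hsd : D - sg z ≠ 0 ∧ 0 < D / (D - sg z) ∧ D / (D - sg z) < 1 := by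
      rcases lt_or_gt_of_ne hD0 with hDneg | hDpos
      · have hsgpos : 0 < sg z := by nlinarith
        refine ⟨by intro h; nlinarith, div_pos_of_neg_of_neg hDneg (by linarith), ?_⟩
        rw [div_lt_iff_of_neg (by linarith : D - sg z < 0)]; linarith
      · have hsgneg : sg z < 0 := by nlinarith
        refine ⟨by intro h; nlinarith, div_pos hDpos (by linarith), ?_⟩
        rw [div_lt_one (by linarith : 0 < D - sg z)]; linarith
    obtain ⟨hsd0, hs1, hs2⟩ := hsd
    set s := D / (D - sg z) with hsdef
    set q := o + s • (z - o) with hqdef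
    have hqseg : q ∈ openSegment ℝ o z := openSegment_mem' hs1 hs2 rfl
    have hqK : q ∈ convexHull ℝ P :=
      (convex_convexHull ℝ P).openSegment_subset hoK (hPK hz) hqseg
    have hζq : cmap (q - o) = s • cmap (z - o) := by
      rw [hqdef, show (o + s • (z - o)) - o = s • (z - o) by abel, map_smul]
    have hEF : det2 (Y - X) X = -D := by
      rw [det2_sub_left, det2_self, det2_neg X Y, hD]; ring
    have hsgz_eq : det2 (Y - X) (cmap (z - o)) = sg z - D := by
      have h6 : sg z = det2 (Y - X) (cmap (z - o)) - det2 (Y - X) X := by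
        simp only [hsgdef]; rw [det2_sub_right]
      rw [hEF] at h6; linarith
    have hσq0 : det2 (Y - X) (cmap (q - o) - X) = 0 := by
      rw [det2_sub_right, hζq, det2_smul_right, hsgz_eq, hEF]
      have h7 : s * (sg z - D) = -D := by
        rw [hsdef, div_mul_eq_mul_div, div_eq_iff hsd0]; ring
      rw [h7]; ring
    obtain ⟨μ, hμ⟩ := det2_dep hXne hσq0
    have hqx : q - x = μ • (y - x) := hlift q hqK x (hPK hx) μ hμ
    rcases lt_trichotomy μ 0 with hμ0 | hμ0 | hμ0
    · exfalso
      have hμne : (1:ℝ) - μ ≠ 0 := by intro h; linarith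
      have hqeq : q = x + μ • (y - x) := by rw [← hqx]; abel
      have hyq : y - q = (1 - μ) • (y - x) := by rw [hqeq]; module
      have hxeq : x = q + (-μ/(1-μ)) • (y - q) := by
        rw [hyq, smul_smul, div_mul_cancel₀ _ hμne, hqeq]
        module
      have hseg := openSegment_mem' (show 0 < -μ/(1-μ) by
          apply div_pos <;> linarith)
        (by rw [div_lt_one (by linarith)]; linarith) hxeq
      have := hext' x hx q hqK y (hPK hy') hseg
      exact hyx this.2
    · exfalso
      have h7 : cmap (q - o) = cmap (x - o) := by
        rw [hμ0, zero_smul] at hμ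
        have h8 : cmap (q - o) = X := sub_eq_zero.mp hμ
        rw [h8, hXdef]
      have hqx' : q = x := hinj q hqK x (hPK hx) h7
      have := hext' x hx o hoK z (hPK hz) (hqx' ▸ hqseg)
      exact honP (this.1 ▸ hx)
    · rcases lt_trichotomy μ 1 with hμ1 | hμ1 | hμ1
      · have hZexp : s • cmap (z - o) = X + μ • (Y - X) := by
          rw [← hζq]
          have := hμ
          rw [sub_eq_iff_eq_add] at this
          rw [this]; abel
        have hDD : 0 < D * D := mul_self_pos.mpr hD0
        constructor
        · have h8 : s * det2 (cmap (z - o)) Y = (1 - μ) * D := by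
            have h9 := congrArg (fun v => det2 v Y) hZexp
            simp only [det2_smul_left, det2_add_left, det2_sub_left, det2_self] at h9
            rw [h9, hD]; ring
          have h10 : det2 (cmap (z - o)) Y = (1 - μ) * D / s := by
            rw [eq_div_iff (ne_of_gt hs1)]; linarith
          rw [h10, show (1 - μ) * D / s * D = (1 - μ) * (D * D) / s by ring]
          exact div_pos (mul_pos (by linarith) hDD) hs1
        · have h8 : s * det2 X (cmap (z - o)) = μ * D := by
            have h9 := congrArg (fun v => det2 X v) hZexp
            simp only [det2_smul_right, det2_add_right, det2_sub_right, det2_self] at h9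
            rw [h9, hD]; ring
          have h10 : det2 X (cmap (z - o)) = μ * D / s := by
            rw [eq_div_iff (ne_of_gt hs1)]; linarith
          rw [h10, show μ * D / s * D = μ * (D * D) / s by ring]
          exact div_pos (mul_pos hμ0 hDD) hs1
      · exfalso
        have h7 : cmap (q - o) = cmap (y - o) := by
          rw [hμ1, one_smul] at hμ
          have h8 : cmap (q - o) = Y := sub_left_inj.mp hμ
          rw [h8, hYdef]
        have hqy : q = y := hinj q hqK y (hPK hy') h7
        have := hext' y hy' o hoK z (hPK hz) (hqy ▸ hqseg)
        exact honP (this.1 ▸ hy')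
      · exfalso
        have hyeq : y = x + (1/μ) • (q - x) := by
          rw [hqx, smul_smul, one_div_mul_cancel (by linarith : μ ≠ 0), one_smul]; abel
        have hseg := openSegment_mem' (show (0:ℝ) < 1/μ by positivity)
          (by rw [div_lt_one (by linarith)]; linarith) hyeq
        have := hext' y hy' x (hPK hx) q hqK hseg
        exact hyx this.1.symm
  have claimB : ∀ z ∈ P, 0 < sg z * D →
      ¬(0 < det2 (cmap (z - o)) Y * D ∧ 0 < det2 X (cmap (z - o)) * D) := by
    rintro z hz hprod ⟨h1, h2⟩
    have hD0 : D ≠ 0 := by intro h; rw [h, mul_zero] at hprod; exact lt_irrefl _ hprod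
    have hDD : 0 < D * D := mul_self_pos.mpr hD0
    set al := det2 (cmap (z - o)) Y / D with hal
    set be := det2 X (cmap (z - o)) / D with hbe
    have hal0 : 0 < al := by
      rw [hal, show det2 (cmap (z - o)) Y / D = det2 (cmap (z - o)) Y * D / (D * D) by
        rw [mul_div_mul_right _ _ hD0]]
      exact div_pos h1 hDD
    have hbe0 : 0 < be := by
      rw [hbe, show det2 X (cmap (z - o)) / D = det2 X (cmap (z - o)) * D / (D * D) by
        rw [mul_div_mul_right _ _ hD0]]
      exact div_pos h2 hDD
    have he1 : det2 (cmap (z - o)) Y = al * D := by rw [hal]; field_simp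
    have he2 : det2 X (cmap (z - o)) = be * D := by rw [hbe]; field_simp
    have hsum : al + be < 1 := by
      have hsg_eq : sg z = (1 - al - be) * D := by
        rw [hXZdecomp z, he1, he2]; ring
      rw [hsg_eq] at hprod
      nlinarith [hprod, hDD]
    set ss := al + be with hss
    have hss0 : 0 < ss := by rw [hss]; linarith
    set q' := x + (be/ss) • (y - x) with hq'
    have hq'seg : q' ∈ openSegment ℝ x y := openSegment_mem'
      (div_pos hbe0 hss0) (by rw [div_lt_one hss0, hss]; linarith) rfl
    have hq'K : q' ∈ convexHull ℝ P :=
      (convex_convexHull ℝ P).openSegment_subset (hPK hx) (hPK hy') hq'seg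
    have hZal : cmap (z - o) = al • X + be • Y := by
      have hcr := cramer2 X Y (cmap (z - o))
      rw [← hD, he1, he2] at hcr
      have h9 := congrArg (fun v => (1/D) • v) hcr
      simp only [smul_add, smul_smul] at h9
      rw [one_div_mul_cancel hD0, one_smul] at h9
      have e1 : 1/D * (al * D) = al := by field_simp
      have e2 : 1/D * (be * D) = be := by field_simp
      rw [e1, e2] at h9
      exact h9
    have hζq' : ss • cmap (q' - o) = cmap (z - o) := by
      have h1' : cmap (q' - o) = X + (be/ss) • (Y - X) := by
        have h1'' : cmap (q' - o) = cmap (x - o) + (be/ss) • (cmap (y - o) - cmap (x - o)) := by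
          rw [show q' - o = (x - o) + (be/ss) • ((y - o) - (x - o)) from by rw [hq']; module]
          simp only [map_add, map_smul, map_sub]
        rw [← hXdef, ← hYdef] at h1''
        exact h1''
      rw [h1', smul_add, smul_smul, mul_div_cancel₀ _ (ne_of_gt hss0), hZal]
      rw [hss]
      module
    set pt := o + ss • (q' - o) with hpt
    have hptseg : pt ∈ openSegment ℝ o q' := openSegment_mem' hss0 (by linarith) rfl
    have hptK : pt ∈ convexHull ℝ P :=
      (convex_convexHull ℝ P).openSegment_subset hoK hq'K hptseg
    have hptz : pt = z := by
      apply hinj pt hptK z (hPK hz)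
      rw [hpt, show (o + ss • (q' - o)) - o = ss • (q' - o) by abel, map_smul, hζq']
    have := hext' z hz o hoK q' hq'K (hptz ▸ hptseg)
    exact honP (this.1 ▸ hz)
  -- final case analysis: the "between" set is exactly one side of the chord
  have hbx := kap_bounds (hc2 x hx)
  have hby := kap_bounds (hc2 y hy')
  have hfilter_eq : hfin.toFinset.filter (fun z =>
      kap X < kap (cmap (z - o)) ∧ kap (cmap (z - o)) < kap Y) =
      hfin.toFinset.filter (fun z => z ≠ x ∧ z ≠ y ∧ sg z < 0) := by
    apply Finset.filter_congr
    intro z hzf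
    have hz : z ∈ P := hfin.mem_toFinset.mp hzf
    have hbz := kap_bounds (hc2 z hz)
    have iXZ := det2_pos_iff (hc2 x hx) (hc2 z hz)
    have iZX := det2_pos_iff (hc2 z hz) (hc2 x hx)
    have iZY := det2_pos_iff (hc2 z hz) (hc2 y hy')
    have iYZ := det2_pos_iff (hc2 y hy') (hc2 z hz)
    have iXY := det2_pos_iff (hc2 x hx) (hc2 y hy')
    have iYX := det2_pos_iff (hc2 y hy') (hc2 x hx)
    rcases lt_trichotomy D 0 with hD0 | hD0 | hD0
    · -- D < 0 : the short arc from x to y wraps around the cut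
      have hgap : kap X < kap Y - 2 := by
        have hYX : (0:ℝ) < det2 Y X := by
          have : det2 Y X = -D := by rw [det2_neg X Y, hD]
          rw [this]; linarith
        rcases iYX.mp hYX with ⟨h1, h2⟩ | h3
        · exact absurd hklt (by linarith)
        · exact h3
      constructor
      · rintro ⟨h1, h2⟩
        have hzx : z ≠ x := fun h => by subst h; exact lt_irrefl _ h1
        have hzy : z ≠ y := fun h => by subst h; exact lt_irrefl _ h2
        refine ⟨hzx, hzy, ?_⟩
        rcases (hsgne z hz hzx hzy).lt_or_gt with h | h
        · exact h
        · exfalso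
          obtain ⟨hc1, hc2'⟩ := claimA z hz hzx hzy (by nlinarith)
          have hZY : det2 (cmap (z - o)) Y < 0 := by nlinarith
          have hXZ : det2 X (cmap (z - o)) < 0 := by nlinarith
          have hYZpos : 0 < det2 Y (cmap (z - o)) := by
            rw [det2_neg (cmap (z - o)) Y]; linarith
          have hZXpos : 0 < det2 (cmap (z - o)) X := by
            have : det2 (cmap (z - o)) X = -det2 X (cmap (z - o)) := det2_neg X _
            rw [this]; linarith
          rcases iYZ.mp hYZpos with ⟨ha, hb⟩ | hcc
          · linarith
          · rcases iZX.mp hZXpos with ⟨hd, he⟩ | hf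
            · linarith
            · linarith [hbz.1, hby.2]
      · rintro ⟨hzx, hzy, hneg⟩
        by_contra hcon
        push_neg at hcon
        have hkzx' : kap (cmap (z - o)) ≠ kap X := hkeyne x hx z hz hzx
        have hkzy' : kap (cmap (z - o)) ≠ kap Y := hkeyne y hy' z hz hzy
        have hcases : kap (cmap (z - o)) < kap X ∨ kap Y < kap (cmap (z - o)) := by
          rcases lt_or_gt_of_ne hkzx' with h | h
          · exact Or.inl h
          · exact Or.inr (lt_of_le_of_ne (hcon h) (Ne.symm hkzy'))
        apply claimB z hz (by nlinarith)
        rcases hcases with h | h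
        · have h1 : 0 < det2 (cmap (z - o)) X := iZX.mpr (Or.inl ⟨h, by
            by_contra hcc; push_neg at hcc; linarith [hbz.1, hby.2]⟩)
          have h2 : 0 < det2 Y (cmap (z - o)) := iYZ.mpr (Or.inr (by linarith))
          have e1 : det2 (cmap (z - o)) Y = -det2 Y (cmap (z - o)) := det2_neg Y _
          have e2 : det2 X (cmap (z - o)) = -det2 (cmap (z - o)) X := det2_neg _ X
          constructor
          · rw [e1]; nlinarith
          · rw [e2]; nlinarith
        · have h1 : 0 < det2 (cmap (z - o)) X := iZX.mpr (Or.inr (by linarith))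
          have h2 : 0 < det2 Y (cmap (z - o)) := iYZ.mpr (Or.inl ⟨h, by
            by_contra hcc; push_neg at hcc; linarith [hbz.2, hbx.1]⟩)
          have e1 : det2 (cmap (z - o)) Y = -det2 Y (cmap (z - o)) := det2_neg Y _
          have e2 : det2 X (cmap (z - o)) = -det2 (cmap (z - o)) X := det2_neg _ X
          constructor
          · rw [e1]; nlinarith
          · rw [e2]; nlinarith
    · -- D = 0 : x and y are antipodal through o
      have hX0 : X ≠ 0 := by
        intro h
        apply hc2 x hx
        rw [← hXdef, h]
        rfl
      have hdXY : det2 X Y = 0 := by rw [← hD]; exact hD0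
      obtain ⟨μ, hμ⟩ := det2_dep hX0 hdXY
      have hμ0 : μ < 0 := by
        rcases lt_trichotomy μ 0 with h | h | h
        · exact h
        · exfalso
          apply hc2 y hy'
          rw [← hYdef, hμ, h, zero_smul]
          rfl
        · exact absurd (hzray x hx y hy' hyx μ h (by rw [← hYdef, ← hXdef]; exact hμ)) not_false
      rcases (hc2 x hx).lt_or_gt with hX2 | hX2
      · -- X.2 < 0, so kap Y = kap X + 2
        have hky : kap Y = kap X + 2 := by rw [hμ]; exact kap_smul_neg_neg hX2 hμ0
        have hsgz : ∀ w : E3, sg w = (μ - 1) * det2 X (cmap (w - o)) := by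
          intro w
          rw [hXZdecomp w]
          have h11 : det2 (cmap (w - o)) Y = -(μ * det2 X (cmap (w - o))) := by
            rw [hμ, det2_smul_right, det2_neg X (cmap (w - o))]; ring
          rw [h11, hD0]; ring
        constructor
        · rintro ⟨h1, h2⟩
          have hzx : z ≠ x := fun h => by subst h; exact lt_irrefl _ h1
          have hzy : z ≠ y := fun h => by subst h; exact lt_irrefl _ h2
          refine ⟨hzx, hzy, ?_⟩
          rw [hsgz z]
          have h12 : 0 < det2 X (cmap (z - o)) := iXZ.mpr (Or.inl ⟨h1, by
            rw [hky] at h2; linarith⟩)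
          nlinarith
        · rintro ⟨hzx, hzy, hneg⟩
          rw [hsgz z] at hneg
          have hXZpos : 0 < det2 X (cmap (z - o)) := by nlinarith
          rcases iXZ.mp hXZpos with ⟨h1, h2⟩ | h3
          · exact ⟨h1, by rw [hky]; linarith⟩
          · exfalso
            have := kap_mem_neg hX2
            linarith [hbz.1]
      · -- X.2 > 0 is impossible since kap Y = kap X - 2 < kap X
        exfalso
        have hky : kap Y = kap X - 2 := by rw [hμ]; exact kap_smul_neg_pos hX2 hμ0
        linarith
    · -- D > 0
      have hk2 : kap Y < kap X + 2 := by
        have hXYpos : (0:ℝ) < det2 X Y := by rw [← hD]; exact hD0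
        rcases iXY.mp hXYpos with ⟨h1, h2⟩ | h3
        · exact h2
        · linarith
      constructor
      · rintro ⟨h1, h2⟩
        have hzx : z ≠ x := fun h => by subst h; exact lt_irrefl _ h1
        have hzy : z ≠ y := fun h => by subst h; exact lt_irrefl _ h2
        refine ⟨hzx, hzy, ?_⟩
        have hcone : 0 < det2 (cmap (z - o)) Y * D ∧ 0 < det2 X (cmap (z - o)) * D := by
          constructor
          · have h13 : 0 < det2 (cmap (z - o)) Y := iZY.mpr (Or.inl ⟨h2, by linarith⟩)
            nlinarith
          · have h13 : 0 < det2 X (cmap (z - o)) := iXZ.mpr (Or.inl ⟨h1, by linarith⟩)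
            nlinarith
        rcases (hsgne z hz hzx hzy).lt_or_gt with h | h
        · exact h
        · exact absurd hcone (claimB z hz (by nlinarith))
      · rintro ⟨hzx, hzy, hneg⟩
        obtain ⟨hc1, hc2'⟩ := claimA z hz hzx hzy (by nlinarith)
        have hZY : 0 < det2 (cmap (z - o)) Y := by nlinarith
        have hXZ : 0 < det2 X (cmap (z - o)) := by nlinarith
        rcases iXZ.mp hXZ with ⟨h1, h2⟩ | h3
        · rcases iZY.mp hZY with ⟨h4, h5⟩ | h6
          · exact ⟨h1, h4⟩
          · exact absurd hklt (by linarith)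
        · exfalso
          rcases iZY.mp hZY with ⟨h4, h5⟩ | h6
          · linarith
          · linarith
  rw [hfilter_eq]
  exact evenside (fun t => t < 0)


set_option maxHeartbeats 2000000 in
/-- The alternating two-colouring of the vertex set of a U-polygon. -/
lemma coloring_exists {P U : Set E3}
    (hfin : P.Finite) (hcard : 3 ≤ P.ncard)
    (hcop : Coplanar ℝ P) (hncol : ¬ Collinear ℝ P)
    (hext : ∀ x ∈ P, x ∈ Set.extremePoints ℝ (convexHull ℝ P))
    (hmatch : ∀ u ∈ U, ∀ x ∈ P, ∃ y ∈ P, y ≠ x ∧ y ∈ lineThrough x u) :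
    ∃ A B : Set E3, A ⊆ P ∧ B ⊆ P ∧ A.Nonempty ∧ B.Nonempty ∧ (A ∩ B = ∅) ∧
      ∀ u ∈ U, ∀ p : E3, (A ∩ lineThrough p u).ncard = (B ∩ lineThrough p u).ncard := by
  classical
  have hPK : P ⊆ convexHull ℝ P := subset_convexHull ℝ P
  have hext' : ∀ x ∈ P, ∀ a ∈ convexHull ℝ P, ∀ b ∈ convexHull ℝ P,
      x ∈ openSegment ℝ a b → a = x ∧ b = x := fun x hx => (mem_extremePoints.mp (hext x hx)).2
  obtain ⟨a, ha, b, hb, hab⟩ := (Set.one_lt_ncard hfin).mp (by omega)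
  set o : E3 := a + (2⁻¹ : ℝ) • (b - a) with ho
  have hoseg : o ∈ openSegment ℝ a b := openSegment_mem' (by norm_num) (by norm_num) rfl
  have hoK : o ∈ convexHull ℝ P :=
    (convex_convexHull ℝ P).openSegment_subset (hPK ha) (hPK hb) hoseg
  have honP : o ∉ P := by
    intro hoP
    have := hext' o hoP a (hPK ha) b (hPK hb) hoseg
    exact hab (this.1.trans this.2.symm)
  have hne0 : b - a ≠ 0 := sub_ne_zero.mpr (Ne.symm hab)
  have hexists2 : ∃ c ∈ P, c - a ∉ Submodule.span ℝ {b - a} := by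
    by_contra hcon
    push_neg at hcon
    apply hncol
    rw [collinear_iff_of_mem ha]
    refine ⟨b - a, fun p hp => ?_⟩
    obtain ⟨r, hr⟩ := Submodule.mem_span_singleton.mp (hcon p hp)
    exact ⟨r, by rw [vadd_eq_add, hr]; abel⟩
  obtain ⟨cpt, hcpt, hcspan⟩ := hexists2
  have hv1W : b - a ∈ (vectorSpan ℝ P) := vsub_eq_sub b a ▸ vsub_mem_vectorSpan ℝ hb ha
  have hv2W : cpt - a ∈ (vectorSpan ℝ P) := vsub_eq_sub cpt a ▸ vsub_mem_vectorSpan ℝ hcpt ha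
  have hWK : ∀ z ∈ convexHull ℝ P, ∀ w ∈ convexHull ℝ P, z - w ∈ (vectorSpan ℝ P) := by
    intro z hz w hw
    have hz' : z ∈ affineSpan ℝ P := convexHull_subset_affineSpan P hz
    have hw' : w ∈ affineSpan ℝ P := convexHull_subset_affineSpan P hw
    have := AffineSubspace.vsub_mem_direction hz' hw'
    rwa [direction_affineSpan, vsub_eq_sub] at this
  have hli : LinearIndependent ℝ ![cpt - a, b - a] := by
    rw [linearIndependent_fin2]
    refine ⟨hne0, fun r hr => ?_⟩
    exact hcspan (Submodule.mem_span_singleton.mpr ⟨r, by simpa using hr⟩)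
  have hspan : (vectorSpan ℝ P) = Submodule.span ℝ {cpt - a, b - a} := by
    have hle : Submodule.span ℝ {cpt - a, b - a} ≤ (vectorSpan ℝ P) := by
      rw [Submodule.span_le]
      rintro v hv
      simp only [Set.mem_insert_iff, Set.mem_singleton_iff] at hv
      rcases hv with rfl | rfl
      · exact hv2W
      · exact hv1W
    refine (Submodule.eq_of_le_of_finrank_le hle ?_).symm
    have h2 : Module.finrank ℝ (vectorSpan ℝ P) ≤ 2 := Module.finrank_le_of_rank_le (by exact_mod_cast hcop)
    have h3 : Module.finrank ℝ (Submodule.span ℝ {cpt - a, b - a}) = 2 := by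
      have := finrank_span_eq_card hli
      have hrange : Set.range ![cpt - a, b - a] = {cpt - a, b - a} := by
        simp [Matrix.range_cons, Matrix.range_empty]
        exact Set.pair_comm _ _
      rw [hrange] at this
      rw [this]
      simp
    rw [h3]; exact h2
  have hWrepr : ∀ w ∈ (vectorSpan ℝ P), ∃ s t : ℝ, w = s • (cpt - a) + t • (b - a) := by
    intro w hw
    rw [hspan] at hw
    obtain ⟨s, t, hst⟩ := Submodule.mem_span_pair.mp hw
    exact ⟨s, t, hst.symm⟩
  obtain ⟨tval, htval⟩ := ((hfin.image (fun z =>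
    (inner ℝ (cpt - a) (z - o) : ℝ) / (inner ℝ (b - a) (z - o) : ℝ))).infinite_compl).nonempty
  set cmap : E3 →ₗ[ℝ] ℝ × ℝ :=
    { toFun := fun w => ((inner ℝ (b - a) w : ℝ),
        (inner ℝ (cpt - a) w : ℝ) - tval * (inner ℝ (b - a) w : ℝ)),
      map_add' := by intro p q; apply Prod.ext <;> simp [inner_add_right] <;> ring
      map_smul' := by intro s p; apply Prod.ext <;> simp [inner_smul_right] <;> ring }
    with hcmapdef
  have hkerW : ∀ w ∈ (vectorSpan ℝ P), cmap w = 0 → w = 0 := by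
    intro w hw h0
    obtain ⟨s, t, hst⟩ := hWrepr w hw
    have h1 : (inner ℝ (b - a) w : ℝ) = 0 := congrArg Prod.fst h0
    have h2 : (inner ℝ (cpt - a) w : ℝ) = 0 := by
      have h2' : (inner ℝ (cpt - a) w : ℝ) - tval * (inner ℝ (b - a) w : ℝ) = 0 :=
        congrArg Prod.snd h0
      rw [h1, mul_zero] at h2'; linarith
    have hww : (inner ℝ w w : ℝ) = 0 := by
      calc (inner ℝ w w : ℝ) = (inner ℝ (s • (cpt - a) + t • (b - a)) w : ℝ) := by rw [← hst]
        _ = s * (inner ℝ (cpt - a) w : ℝ) + t * (inner ℝ (b - a) w : ℝ) := by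
            rw [inner_add_left, real_inner_smul_left, real_inner_smul_left]
        _ = 0 := by rw [h1, h2]; ring
    exact inner_self_eq_zero.mp hww
  have hc2 : ∀ z ∈ P, (cmap (z - o)).2 ≠ 0 := by
    intro z hz h0
    have h0' : (inner ℝ (cpt - a) (z - o) : ℝ) - tval * (inner ℝ (b - a) (z - o) : ℝ) = 0 := h0
    by_cases h1 : (inner ℝ (b - a) (z - o) : ℝ) = 0
    · have h2 : (inner ℝ (cpt - a) (z - o) : ℝ) = 0 := by rw [h1, mul_zero] at h0'; linarith
      have hz0 : z - o = 0 := by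
        apply hkerW _ (hWK z (hPK hz) o hoK)
        apply Prod.ext
        · exact h1
        · exact h0
      exact honP (by rwa [sub_eq_zero.mp hz0] at hz)
    · apply htval
      refine ⟨z, hz, ?_⟩
      rw [div_eq_iff h1]; linarith
  choose! M hM1 hM2 hM3 using hmatch
  have hMuniq : ∀ u ∈ U, ∀ x ∈ P, ∀ w ∈ P, w ≠ x → (∃ r' : ℝ, w = x + r' • u) → w = M u x := by
    rintro u hu x hx w hw hwx ⟨r', hr'⟩
    by_contra hne
    obtain ⟨r'', hr''⟩ := hM3 u hu x hx
    have hr'0 : r' ≠ 0 := by intro h; apply hwx; rw [hr', h]; simp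
    exact no_three hext' x hx w hw (M u x) (hM1 u hu x hx) (Ne.symm hwx) (hM2 u hu x hx)
      (fun hq => hne hq.symm) (r''/r')
      (by rw [hr'', hr', show (x + r'' • u) - x = r'' • u by abel,
        show (x + r' • u) - x = r' • u by abel, smul_smul, div_mul_cancel₀ _ hr'0])
  have hMinv : ∀ u ∈ U, ∀ z ∈ P, M u (M u z) = z := by
    intro u hu z hz
    obtain ⟨r', hr'⟩ := hM3 u hu z hz
    exact (hMuniq u hu (M u z) (hM1 u hu z hz) z hz (Ne.symm (hM2 u hu z hz))
      ⟨-r', by rw [hr']; module⟩).symm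
  -- distinct points have distinct pseudo-angles (reprise)
  have hzray : ∀ z ∈ P, ∀ w ∈ P, w ≠ z → ∀ lam : ℝ, 0 < lam →
      cmap (w - o) = lam • cmap (z - o) → False := by
    intro z hz w hw hwz lam hlam heq
    have h0 : cmap ((w - o) - lam • (z - o)) = 0 := by
      rw [map_sub, map_smul, heq]; simp
    have hmem : (w - o) - lam • (z - o) ∈ (vectorSpan ℝ P) :=
      Submodule.sub_mem _ (hWK w (hPK hw) o hoK)
        (Submodule.smul_mem _ _ (hWK z (hPK hz) o hoK))
    have := sub_eq_zero.mp (hkerW _ hmem h0)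
    exact no_ray hext' hoK honP z hz w hw hwz lam hlam this
  have hkeyne : ∀ z ∈ P, ∀ w ∈ P, w ≠ z →
      kap (cmap (w - o)) ≠ kap (cmap (z - o)) := by
    intro z hz w hw hwz heq
    obtain ⟨c, hc, hceq⟩ := kap_inj (hc2 w hw) (hc2 z hz) heq
    exact hzray w hw z hz (Ne.symm hwz) c hc hceq
  -- the rank (number of points with smaller pseudo-angle)
  set keyf : E3 → ℝ := fun z => kap (cmap (z - o)) with hkeyf
  set rank : E3 → ℕ := fun z => ((hfin.toFinset).filter (fun w => keyf w < keyf z)).card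
    with hrank
  -- parity flips along every chord of the matching
  have hflip : ∀ u ∈ U, ∀ x ∈ P, (Odd (rank x) ↔ ¬ Odd (rank (M u x))) := by
    intro u hu x hx
    have hy' : M u x ∈ P := hM1 u hu x hx
    have hyne : M u x ≠ x := hM2 u hu x hx
    have hkne : keyf (M u x) ≠ keyf x := hkeyne x hx (M u x) hy' hyne
    have main : ∀ v w : E3, v ∈ P → w ∈ P → w = M u v → keyf v < keyf w →
        (Odd (rank w) ↔ ¬ Odd (rank v)) := by
      intro v w hv hw hwv hklt
      have heven : Even ((hfin.toFinset.filter (fun z =>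
          keyf v < keyf z ∧ keyf z < keyf w)).card) := by
        exact chord_even hfin hext' hoK honP hWK hkerW hc2
          (hM1 u hu) (hM2 u hu) (hM3 u hu) (hMuniq u hu) hv hwv hklt
      have hsplit : (hfin.toFinset.filter (fun z => keyf z < keyf w)) =
          ((hfin.toFinset.filter (fun z => keyf z < keyf v)) ∪ {v}) ∪
          (hfin.toFinset.filter (fun z => keyf v < keyf z ∧ keyf z < keyf w)) := by
        apply Finset.ext
        intro z
        simp only [Finset.mem_filter, Finset.mem_union, Finset.mem_singleton,
          hfin.mem_toFinset]
        constructor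
        · rintro ⟨hz, hzlt⟩
          rcases lt_trichotomy (keyf z) (keyf v) with h | h | h
          · exact Or.inl (Or.inl ⟨hz, h⟩)
          · refine Or.inl (Or.inr ?_)
            by_contra hne
            exact hkeyne v hv z hz hne h
          · exact Or.inr ⟨hz, h, hzlt⟩
        · rintro ((⟨hz, hzlt⟩ | rfl) | ⟨hz, h1, h2⟩)
          · exact ⟨hz, by linarith⟩
          · exact ⟨hv, hklt⟩
          · exact ⟨hz, h2⟩
      have hd1 : Disjoint (hfin.toFinset.filter (fun z => keyf z < keyf v)) ({v} : Finset E3) := by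
        rw [Finset.disjoint_singleton_right]
        simp only [Finset.mem_filter]
        rintro ⟨-, h⟩
        exact lt_irrefl _ h
      have hd2 : Disjoint ((hfin.toFinset.filter (fun z => keyf z < keyf v)) ∪ {v})
          (hfin.toFinset.filter (fun z => keyf v < keyf z ∧ keyf z < keyf w)) := by
        rw [Finset.disjoint_left]
        intro z hz1 hz2
        simp only [Finset.mem_filter, Finset.mem_union, Finset.mem_singleton] at hz1 hz2
        rcases hz1 with ⟨-, h⟩ | rfl
        · linarith [hz2.2.1]
        · linarith [hz2.2.1]
      have hcards : rank w = rank v + 1 +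
          (hfin.toFinset.filter (fun z => keyf v < keyf z ∧ keyf z < keyf w)).card := by
        show (hfin.toFinset.filter (fun z => keyf z < keyf w)).card = _
        rw [hsplit, Finset.card_union_of_disjoint hd2, Finset.card_union_of_disjoint hd1,
          Finset.card_singleton]
      obtain ⟨c, hc⟩ := heven
      rw [hcards, hc]
      rw [Nat.odd_iff, Nat.odd_iff]
      omega
    rcases lt_or_gt_of_ne hkne with h | h
    · -- keyf (M u x) < keyf x ; x = M u (M u x)
      have := main (M u x) x hy' hx (hMinv u hu x hx).symm h
      tauto
    · have := main x (M u x) hx hy' rfl h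
      tauto
  refine ⟨{z | z ∈ P ∧ Odd (rank z)}, {z | z ∈ P ∧ ¬ Odd (rank z)},
    fun z hz => hz.1, fun z hz => hz.1, ?_, ?_, ?_, ?_⟩
  · -- A nonempty: the point of second-smallest key has rank 1
    have hPfne : hfin.toFinset.Nonempty := by
      rw [Finset.nonempty_iff_ne_empty]
      intro h
      have := hfin.mem_toFinset (a := a)
      rw [h] at this
      simp at this
      exact this ha
    obtain ⟨m, hm, hmmin⟩ := Finset.exists_min_image hfin.toFinset keyf hPfne
    have hmP : m ∈ P := hfin.mem_toFinset.mp hm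
    have hPfne2 : (hfin.toFinset.erase m).Nonempty := by
      rw [← Finset.card_pos, Finset.card_erase_of_mem hm]
      have : hfin.toFinset.card = P.ncard := (Set.ncard_eq_toFinset_card P hfin).symm
      omega
    obtain ⟨m2, hm2, hm2min⟩ := Finset.exists_min_image _ keyf hPfne2
    have hm2P : m2 ∈ P := hfin.mem_toFinset.mp (Finset.mem_of_mem_erase hm2)
    have hm2ne : m2 ≠ m := Finset.ne_of_mem_erase hm2
    refine ⟨m2, hm2P, ?_⟩
    have : (hfin.toFinset.filter (fun w => keyf w < keyf m2)) = {m} := by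
      apply Finset.ext
      intro z
      simp only [Finset.mem_filter, Finset.mem_singleton]
      constructor
      · rintro ⟨hz, hzlt⟩
        by_contra hzm
        have : z ∈ hfin.toFinset.erase m := Finset.mem_erase.mpr ⟨hzm, hz⟩
        linarith [hm2min z this]
      · intro hzm
        rw [hzm]
        refine ⟨hm, ?_⟩
        have h1 := hmmin m2 (Finset.mem_of_mem_erase hm2)
        have h2 : keyf m2 ≠ keyf m := hkeyne m hmP m2 hm2P hm2ne
        rcases h1.lt_or_eq with h | h
        · exact h
        · exact absurd h.symm h2
    show Odd (rank m2)
    show Odd ((hfin.toFinset.filter (fun w => keyf w < keyf m2)).card)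
    rw [this, Finset.card_singleton]
    exact odd_one
  · -- B nonempty: the minimum has rank 0
    have hPfne : hfin.toFinset.Nonempty := ⟨a, hfin.mem_toFinset.mpr ha⟩
    obtain ⟨m, hm, hmmin⟩ := Finset.exists_min_image hfin.toFinset keyf hPfne
    have hmP : m ∈ P := hfin.mem_toFinset.mp hm
    refine ⟨m, hmP, ?_⟩
    have : (hfin.toFinset.filter (fun w => keyf w < keyf m)) = ∅ := by
      apply Finset.eq_empty_of_forall_notMem
      intro z hz
      simp only [Finset.mem_filter] at hz
      linarith [hmmin z hz.1]
    show ¬ Odd ((hfin.toFinset.filter (fun w => keyf w < keyf m)).card)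
    rw [this]
    simp
  · apply Set.eq_empty_of_forall_notMem
    rintro z ⟨⟨-, h1⟩, ⟨-, h2⟩⟩
    exact h2 h1
  · -- equal line counts
    intro u hu p
    by_cases hPl : ∀ v ∈ P, v ∉ lineThrough p u
    · have hA : {z | z ∈ P ∧ Odd (rank z)} ∩ lineThrough p u = ∅ := by
        apply Set.eq_empty_of_forall_notMem
        rintro z ⟨⟨hz, -⟩, hzl⟩
        exact hPl z hz hzl
      have hB : {z | z ∈ P ∧ ¬ Odd (rank z)} ∩ lineThrough p u = ∅ := by
        apply Set.eq_empty_of_forall_notMem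
        rintro z ⟨⟨hz, -⟩, hzl⟩
        exact hPl z hz hzl
      rw [hA, hB]
    · push_neg at hPl
      obtain ⟨v, hv, hvl⟩ := hPl
      obtain ⟨r0, hr0⟩ := hvl
      have hvl : v ∈ lineThrough p u := ⟨r0, hr0⟩
      set w := M u v with hwdef
      have hwP : w ∈ P := hM1 u hu v hv
      have hwv : w ≠ v := hM2 u hu v hv
      obtain ⟨r1, hr1⟩ := hM3 u hu v hv
      have hwl : w ∈ lineThrough p u := ⟨r0 + r1, by rw [hwdef, hr1, hr0]; module⟩
      have honline : ∀ z ∈ P, z ∈ lineThrough p u → z = v ∨ z = w := by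
        rintro z hz ⟨r2, hr2⟩
        by_cases hzv : z = v
        · exact Or.inl hzv
        · refine Or.inr ?_
          have hzeq : z = v + (r2 - r0) • u := by rw [hr2, hr0]; module
          exact hMuniq u hu v hv z hz hzv ⟨r2 - r0, hzeq⟩
      have hflipv := hflip u hu v hv
      by_cases hvA : Odd (rank v)
      · have hwB : ¬ Odd (rank w) := hflipv.mp hvA
        have hAeq : {z | z ∈ P ∧ Odd (rank z)} ∩ lineThrough p u = {v} := by
          apply Set.eq_singleton_iff_unique_mem.mpr
          refine ⟨⟨⟨hv, hvA⟩, hvl⟩, ?_⟩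
          rintro z ⟨⟨hz, hzodd⟩, hzl⟩
          rcases honline z hz hzl with rfl | rfl
          · rfl
          · exact absurd hzodd hwB
        have hBeq : {z | z ∈ P ∧ ¬ Odd (rank z)} ∩ lineThrough p u = {w} := by
          apply Set.eq_singleton_iff_unique_mem.mpr
          refine ⟨⟨⟨hwP, hwB⟩, hwl⟩, ?_⟩
          rintro z ⟨⟨hz, hzodd⟩, hzl⟩
          rcases honline z hz hzl with rfl | rfl
          · exact absurd hvA hzodd
          · rfl
        rw [hAeq, hBeq, Set.ncard_singleton, Set.ncard_singleton]
      · have hwA : Odd (rank w) := by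
          by_contra hc
          exact hvA (hflipv.mpr hc)
        have hAeq : {z | z ∈ P ∧ Odd (rank z)} ∩ lineThrough p u = {w} := by
          apply Set.eq_singleton_iff_unique_mem.mpr
          refine ⟨⟨⟨hwP, hwA⟩, hwl⟩, ?_⟩
          rintro z ⟨⟨hz, hzodd⟩, hzl⟩
          rcases honline z hz hzl with rfl | rfl
          · exact absurd hzodd hvA
          · rfl
        have hBeq : {z | z ∈ P ∧ ¬ Odd (rank z)} ∩ lineThrough p u = {v} := by
          apply Set.eq_singleton_iff_unique_mem.mpr
          refine ⟨⟨⟨hv, hvA⟩, hvl⟩, ?_⟩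
          rintro z ⟨⟨hz, hzodd⟩, hzl⟩
          rcases honline z hz hzl with rfl | rfl
          · rfl
          · exact absurd hwA hzodd
        rw [hAeq, hBeq, Set.ncard_singleton, Set.ncard_singleton]


/-- if there is a U-polygon in an F-type icosahedral model set Λ,
then the convex subsets of Λ are not determined by the X-rays in the directions of U. -/
theorem U_polygon_implies_not_determined :
    ∀ (t : E3) (W : Set E3), IsWindow W →
      ∀ U : Set E3, U.Finite → (∀ u ∈ U, u ∈ Metric.sphere (0 : E3) 1) →
        PairwiseNonParallel U →
        (∃ P : Set E3, IsUPolygon U (modelSet t W) P) →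
        ∃ C₁ C₂ : Set E3, ConvexSubset (modelSet t W) C₁ ∧
          ConvexSubset (modelSet t W) C₂ ∧ C₁ ≠ C₂ ∧ ∀ u ∈ U, XRayEq C₁ C₂ u := by
  intro t W hW U hUfin hUsph hUpar hUP
  obtain ⟨P, hPfin, hPcard, hPsub, hPcop, hPncol, hPext, hPmatch⟩ := hUP
  have hKcpt : IsCompact (convexHull ℝ P) := hPfin.isCompact_convexHull ℝ
  obtain ⟨R, hR⟩ := hKcpt.isBounded.subset_closedBall 0
  have hCfin : (convexHull ℝ P ∩ modelSet t W).Finite :=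
    (modelSet_inter_finite t W hW R).subset (fun z hz => ⟨hz.2, hR hz.1⟩)
  obtain ⟨A, B, hAP, hBP, hAne, hBne, hABdisj, hcount⟩ :=
    coloring_exists hPfin hPcard hPcop hPncol hPext hPmatch
  set C := convexHull ℝ P ∩ modelSet t W with hC
  have hPC : P ⊆ C := fun z hz => ⟨subset_convexHull ℝ P hz, hPsub hz⟩
  have hsubhull : ∀ S : Set E3, convexHull ℝ (C \ S) ⊆ convexHull ℝ P := by
    intro S
    have h1 : convexHull ℝ (C \ S) ⊆ convexHull ℝ (convexHull ℝ P) :=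
      convexHull_mono (fun w hw => hw.1.1)
    rwa [(convex_convexHull ℝ P).convexHull_eq] at h1
  have hconvsub : ∀ S : Set E3, S ⊆ P → ConvexSubset (modelSet t W) (C \ S) := by
    intro S hSP
    refine ⟨hCfin.subset Set.diff_subset, fun z hz => hz.1.2, ?_⟩
    apply Set.Subset.antisymm
    · intro z hz
      exact ⟨subset_convexHull ℝ _ hz, hz.1.2⟩
    · rintro z ⟨hzconv, hzΛ⟩
      have hzK : z ∈ convexHull ℝ P := hsubhull S hzconv
      refine ⟨⟨hzK, hzΛ⟩, ?_⟩
      intro hzS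
      have hzP : z ∈ P := hSP hzS
      have hzext := hPext z hzP
      have hzext2 : z ∈ Set.extremePoints ℝ (convexHull ℝ (C \ S)) := by
        rw [mem_extremePoints]
        exact ⟨hzconv, fun x1 hx1 x2 hx2 hseg =>
          (mem_extremePoints.mp hzext).2 x1 (hsubhull S hx1) x2 (hsubhull S hx2) hseg⟩
      exact (extremePoints_convexHull_subset hzext2).2 hzS
  refine ⟨C \ A, C \ B, hconvsub A hAP, hconvsub B hBP, ?_, ?_⟩
  · obtain ⟨z, hzA⟩ := hAne
    intro heq
    have hz1 : z ∉ C \ A := fun h => h.2 hzA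
    have hz2 : z ∈ C \ B := ⟨hPC (hAP hzA), fun hzB =>
      (Set.eq_empty_iff_forall_notMem.mp hABdisj z) ⟨hzA, hzB⟩⟩
    rw [heq] at hz1
    exact hz1 hz2
  · intro u hu p
    have hAsub : A ∩ lineThrough p u ⊆ C ∩ lineThrough p u :=
      fun z hz => ⟨hPC (hAP hz.1), hz.2⟩
    have hBsub : B ∩ lineThrough p u ⊆ C ∩ lineThrough p u :=
      fun z hz => ⟨hPC (hBP hz.1), hz.2⟩
    have hAfin : (A ∩ lineThrough p u).Finite :=
      hPfin.subset (fun z hz => hAP hz.1)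
    have hBfin : (B ∩ lineThrough p u).Finite :=
      hPfin.subset (fun z hz => hBP hz.1)
    have hAeq : (C \ A) ∩ lineThrough p u =
        (C ∩ lineThrough p u) \ (A ∩ lineThrough p u) := by
      ext z
      constructor
      · rintro ⟨⟨hzC, hzA⟩, hzl⟩
        exact ⟨⟨hzC, hzl⟩, fun h => hzA h.1⟩
      · rintro ⟨⟨hzC, hzl⟩, hzA⟩
        exact ⟨⟨hzC, fun h => hzA ⟨h, hzl⟩⟩, hzl⟩
    have hBeq : (C \ B) ∩ lineThrough p u =
        (C ∩ lineThrough p u) \ (B ∩ lineThrough p u) := by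
      ext z
      constructor
      · rintro ⟨⟨hzC, hzB⟩, hzl⟩
        exact ⟨⟨hzC, hzl⟩, fun h => hzB h.1⟩
      · rintro ⟨⟨hzC, hzl⟩, hzB⟩
        exact ⟨⟨hzC, fun h => hzB ⟨h, hzl⟩⟩, hzl⟩
    rw [hAeq, hBeq, Set.ncard_diff hAsub hAfin, Set.ncard_diff hBsub hBfin,
      hcount u hu p]

end
end

section
/- Let F be a finite subset of ℝ³ and let U ⊂ S² be a finite set of pairwise non-parallel directions. If card(U) > card(F), then the grid of F with respect to the X-rays in the directions of U equals F itself: G^F_U = F. -/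
noncomputable section

open Set

/-- The grid of F with respect to the X-rays in the directions of U: the intersection
over u ∈ U of the unions of all lines parallel to u through a point of F. -/
def grid (F U : Set E3) : Set E3 :=
  {x | ∀ u ∈ U, ∃ y ∈ F, x ∈ lineThrough y u}

/-- Proposition 5.3 of [H2]: if there are more directions in U than
points in F, then the grid of F equals F itself. -/
theorem grid_eq_self_of_many_directions :
    ∀ (F U : Set E3), F.Finite → U.Finite →
      (∀ u ∈ U, u ∈ Metric.sphere (0 : E3) 1) → PairwiseNonParallel U →
      F.ncard < U.ncard → grid F U = F := by
  intro F U hF hU hsph hnp hcard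
  ext x
  simp only [grid, Set.mem_setOf_eq]
  constructor
  · intro hx
    by_contra hxF
    classical
    set f : E3 → E3 := fun u =>
      if h : ∃ y ∈ F, x ∈ lineThrough y u then h.choose else x with hfdef
    have hmap : ∀ u ∈ U, f u ∈ F := by
      intro u hu
      have h := hx u hu
      simp only [hfdef, dif_pos h]
      exact h.choose_spec.1
    obtain ⟨u, hu, v, hv, huv, hfe⟩ :=
      Set.exists_ne_map_eq_of_ncard_lt_of_maps_to hcard hmap hF
    have hhu := hx u hu
    have hhv := hx v hv
    have h1 : x ∈ lineThrough (f u) u := by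
      simp only [hfdef, dif_pos hhu]; exact hhu.choose_spec.2
    have h2 : x ∈ lineThrough (f v) v := by
      simp only [hfdef, dif_pos hhv]; exact hhv.choose_spec.2
    obtain ⟨r, hr⟩ := h1
    obtain ⟨s, hs⟩ := h2
    have hxu : x ≠ f u := fun h => hxF (h ▸ hmap u hu)
    have hr0 : r ≠ 0 := by
      rintro rfl; apply hxu; simpa using hr
    have hs0 : s ≠ 0 := by
      rintro rfl; apply hxF
      have : x = f v := by simpa using hs
      exact this ▸ hmap v hv
    apply hnp hu hv huv
    refine ⟨r⁻¹ * s, ?_⟩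
    have : r • u = s • v := by
      have := hr.symm.trans (hfe ▸ hs)
      exact add_left_cancel this
    rw [mul_smul, ← this, inv_smul_smul₀ hr0]
  · intro hxF u hu
    exact ⟨x, hxF, 0, by simp⟩

end
end
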